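/- For every natural number m ≥ 1 and every real x with −1/2 < x < 1/2, one has 0 < cos(πx) − P_m(x) < (π^{2m+2} (1/4 − x²)^{m+1} / (2m+2)!) · 1/(1 − q_m), where q_m := (π²/4)/((2m+4)(2m+3)). -/

import Mathlib

open Real

/-- The summand `a_{j,k} = (-π²/4)^k / (2j+2k)! · C(j+k, j)`. -/
noncomputable def a (j k : ℕ) : ℝ :=
  (-(π ^ 2) / 4) ^ k / (Nat.factorial (2 * j + 2 * k)) * (Nat.choose (j + k) j)

/-- `t_j = Σ_{k=0}^∞ a_{j,k}`. -/
noncomputable def t (j : ℕ) : ℝ := ∑' k : ℕ, a j k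

/-- `P_m(x) = Σ_{j=1}^m t_j π^{2j} (1/4 − x²)^j`. -/
noncomputable def P (m : ℕ) (x : ℝ) : ℝ :=
  ∑ j ∈ Finset.Icc 1 m, t j * π ^ (2 * j) * (1 / 4 - x ^ 2) ^ j

/-!
Put `y = π²(1/4 − x²)`, so that `−(πx)² = y − π²/4`. Expanding `(y − π²/4)ⁿ` binomially in
the Taylor series of `cos` and regrouping the absolutely convergent double series by powers of `y`
gives `cos (πx) = Σ_j t_j yʲ`; at `x = 1/2` this shows `t_0 = cos (π/2) = 0`. For `j ≥ 1` the
series `t_j = Σ_k (-1)ᵏ b_{j,k}`, `b_{j,k} = |a_{j,k}|`, is alternating with strictly decreasing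
terms, so `0 < t_j < b_{j,0} = 1/(2j)!`. Hence `cos (πx) − P_m(x) = Σ_{j>m} t_j yʲ` is positive
and below `Σ_{j>m} yʲ/(2j)!`, whose consecutive terms have ratio at most `y/((2m+4)(2m+3)) ≤ q_m`.
-/

open Finset
open Filter Topology
open scoped Nat

theorem Summable.tsum_eq_tsum_sum_antidiagonal {α : Type*} [AddCommMonoid α] [TopologicalSpace α]
    [ContinuousAdd α] [T3Space α] {f : ℕ × ℕ → α} (hf : Summable f) :
    ∑' p, f p = ∑' n, ∑ p ∈ antidiagonal n, f p := by
  conv_rhs => congr; ext; rw [← Finset.sum_finset_coe, ← tsum_fintype (L := .unconditional _)]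
  rw [← HasAntidiagonal.sigmaAntidiagonalEquivProd.tsum_eq]
  exact ((HasAntidiagonal.sigmaAntidiagonalEquivProd.summable_iff).mpr hf).tsum_sigma'
    (fun n ↦ (hasSum_fintype _).summable)

noncomputable def b (j k : ℕ) : ℝ :=
  (π ^ 2 / 4) ^ k / (2 * j + 2 * k)! * (j + k).choose j

lemma a_eq_neg_one_pow_mul_b (j k : ℕ) : a j k = (-1) ^ k * b j k := by
  rw [a, b, neg_div, neg_pow]
  ring

lemma b_pos (j k : ℕ) : 0 < b j k := by
  have : 0 < (j + k).choose j := Nat.choose_pos (by omega)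
  unfold b
  positivity

lemma b_zero (j : ℕ) : b j 0 = 1 / (2 * j)! := by
  simp [b]

lemma b_le (j k : ℕ) : b j k ≤ (π ^ 2 / 4) ^ k / k ! / j ! := by
  have hchoose : ((j + k).choose j : ℝ) * k ! * j ! = (j + k)! := by
    have := Nat.add_choose_mul_factorial_mul_factorial k j
    rw [add_comm k j] at this
    exact_mod_cast this
  calc b j k ≤ (π ^ 2 / 4) ^ k / (j + k)! * (j + k).choose j := by
        unfold b; gcongr (π ^ 2 / 4) ^ k / ?_ * _; exact_mod_cast Nat.factorial_le (by omega)
    _ = (π ^ 2 / 4) ^ k / k ! / j ! := by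
        have : 0 < (j + k).choose j := Nat.choose_pos (by omega)
        rw [← hchoose]
        field_simp

lemma cast_factorial_two_mul_add_two (n : ℕ) :
    ((2 * n + 2)! : ℝ) = (2 * n)! * ((2 * n + 1) * (2 * n + 2)) := by
  rw [Nat.factorial_succ, Nat.factorial_succ]
  push_cast
  ring

lemma b_succ (j k : ℕ) :
    b j (k + 1) = b j k * (π ^ 2 / 4 / ((2 * k + 2) * (2 * j + 2 * k + 1))) := by
  have hchoose : ((j + k).choose j : ℝ) * (j + k + 1) = (j + k + 1).choose j * (k + 1) := by
    exact_mod_cast (Nat.choose_mul_succ_eq (j + k) j).trans (by congr 2; omega)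
  have hfact : ((2 * j + 2 * (k + 1))! : ℝ) =
      (2 * j + 2 * k)! * ((2 * j + 2 * k + 1) * (2 * j + 2 * k + 2)) := by
    rw [show 2 * j + 2 * (k + 1) = 2 * (j + k) + 2 by ring, cast_factorial_two_mul_add_two,
      show 2 * (j + k) = 2 * j + 2 * k by ring]
    push_cast; ring
  simp only [b, hfact, show j + (k + 1) = j + k + 1 by ring]
  field_simp
  rw [mul_assoc _ _ ((k : ℝ) + 1), ← hchoose]
  ring

lemma strictAnti_b {j : ℕ} (hj : 1 ≤ j) : StrictAnti (b j) := by
  refine strictAnti_nat_of_succ_lt fun k ↦ ?_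
  rw [b_succ]
  refine mul_lt_of_lt_one_right (b_pos j k) ((div_lt_one (by positivity)).mpr ?_)
  have : (1 : ℝ) ≤ j := by exact_mod_cast hj
  nlinarith [pi_lt_d2, pi_pos, (k.cast_nonneg : (0 : ℝ) ≤ k)]

lemma summable_a_mul_pow (y : ℝ) : Summable fun p : ℕ × ℕ ↦ a p.1 p.2 * y ^ p.1 := by
  refine Summable.of_norm_bounded
    ((Real.summable_pow_div_factorial |y|).mul_of_nonneg
      (Real.summable_pow_div_factorial (π ^ 2 / 4)) (fun _ ↦ by positivity) fun _ ↦ by positivity)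
    fun ⟨j, k⟩ ↦ ?_
  rw [Real.norm_eq_abs, abs_mul, a_eq_neg_one_pow_mul_b, abs_mul, abs_pow, abs_neg, abs_one,
    one_pow, one_mul, abs_of_pos (b_pos j k), abs_pow]
  calc b j k * |y| ^ j ≤ (π ^ 2 / 4) ^ k / k ! / j ! * |y| ^ j := by gcongr; exact b_le j k
    _ = |y| ^ j / j ! * ((π ^ 2 / 4) ^ k / k !) := by ring

lemma sum_antidiagonal_a_mul_pow (u : ℝ) (n : ℕ) :
    ∑ p ∈ antidiagonal n, a p.1 p.2 * (π ^ 2 / 4 - u ^ 2) ^ p.1 =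
      (-1) ^ n * u ^ (2 * n) / (2 * n)! := by
  rw [Nat.sum_antidiagonal_eq_sum_range_succ (fun j k ↦ a j k * (π ^ 2 / 4 - u ^ 2) ^ j)]
  have hterm : ∀ j ∈ range (n + 1), a j (n - j) * (π ^ 2 / 4 - u ^ 2) ^ j =
      (π ^ 2 / 4 - u ^ 2) ^ j * (-(π ^ 2) / 4) ^ (n - j) * n.choose j / (2 * n)! := by
    intro j hj
    have hjn : j ≤ n := Nat.lt_succ_iff.mp (mem_range.mp hj)
    rw [a, show 2 * j + 2 * (n - j) = 2 * n by omega, show j + (n - j) = n by omega]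
    ring
  rw [sum_congr rfl hterm, ← sum_div, ← add_pow, pow_mul, ← mul_pow]
  congr 2
  ring

lemma cos_eq_tsum_t_mul_pow (u : ℝ) : cos u = ∑' j, t j * (π ^ 2 / 4 - u ^ 2) ^ j := by
  have hF := summable_a_mul_pow (π ^ 2 / 4 - u ^ 2)
  calc cos u = ∑' n, (-1) ^ n * u ^ (2 * n) / (2 * n)! := cos_eq_tsum u
    _ = ∑' n, ∑ p ∈ antidiagonal n, a p.1 p.2 * (π ^ 2 / 4 - u ^ 2) ^ p.1 := by
      simp only [sum_antidiagonal_a_mul_pow]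
    _ = ∑' j, ∑' k, a j k * (π ^ 2 / 4 - u ^ 2) ^ j := by
      rw [← hF.tsum_eq_tsum_sum_antidiagonal, hF.tsum_prod]
    _ = ∑' j, t j * (π ^ 2 / 4 - u ^ 2) ^ j := by
      simp only [t, tsum_mul_right]

lemma summable_t_mul_pow (y : ℝ) : Summable fun j ↦ t j * y ^ j := by
  simpa only [t, tsum_mul_right] using (summable_a_mul_pow y).prod

lemma t_zero : t 0 = 0 := by
  have h := cos_eq_tsum_t_mul_pow (π / 2)
  rwa [cos_pi_div_two, show π ^ 2 / 4 - (π / 2) ^ 2 = 0 by ring,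
    tsum_eq_single 0 fun j hj ↦ by simp [hj], pow_zero, mul_one, eq_comm] at h

lemma tendsto_sum_range_b (j : ℕ) :
    Tendsto (fun n ↦ ∑ i ∈ range n, (-1) ^ i * b j i) atTop (𝓝 (t j)) := by
  have : Summable (a j) := by simpa using (summable_a_mul_pow 1).prod_factor j
  simpa only [t, a_eq_neg_one_pow_mul_b] using this.hasSum.tendsto_sum_nat

lemma t_pos {j : ℕ} (hj : 1 ≤ j) : 0 < t j := by
  have h : b j 0 - b j 1 ≤ t j := by
    simpa [sum_range_succ, ← sub_eq_add_neg] using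
      (strictAnti_b hj).antitone.alternating_series_le_tendsto (tendsto_sum_range_b j) 1
  linarith [strictAnti_b hj zero_lt_one]

lemma t_lt {j : ℕ} (hj : 1 ≤ j) : t j < 1 / (2 * j)! := by
  have h : t j ≤ b j 0 - b j 1 + b j 2 := by
    simpa [sum_range_succ, ← sub_eq_add_neg] using
      (strictAnti_b hj).antitone.tendsto_le_alternating_series (tendsto_sum_range_b j) 1
  linarith [strictAnti_b hj one_lt_two, b_zero j]

lemma t_nonneg (j : ℕ) : 0 ≤ t j := by
  rcases j.eq_zero_or_pos with rfl | hj
  · exact t_zero.ge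
  · exact (t_pos hj).le

lemma P_eq_sum_range (m : ℕ) (x : ℝ) :
    P m x = ∑ j ∈ range (m + 1), t j * (π ^ 2 * (1 / 4 - x ^ 2)) ^ j := by
  rw [range_eq_Ico, sum_eq_sum_Ico_succ_bot (by omega : 0 < m + 1), t_zero, zero_mul, zero_add,
    Ico_add_one_right_eq_Icc, P]
  refine sum_congr rfl fun j _ ↦ ?_
  rw [mul_pow, ← pow_mul, mul_assoc]

lemma cos_sub_P_eq_tsum (m : ℕ) (x : ℝ) :
    cos (π * x) - P m x = ∑' k, t (k + (m + 1)) * (π ^ 2 * (1 / 4 - x ^ 2)) ^ (k + (m + 1)) := by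
  rw [cos_eq_tsum_t_mul_pow, show π ^ 2 / 4 - (π * x) ^ 2 = π ^ 2 * (1 / 4 - x ^ 2) by ring,
    P_eq_sum_range, ← (summable_t_mul_pow _).sum_add_tsum_nat_add (m + 1), add_sub_cancel_left]

lemma pow_div_factorial_two_mul_le {y : ℝ} (hy : 0 ≤ y) (n k : ℕ) :
    y ^ (k + n) / (2 * (k + n))! ≤ y ^ n / (2 * n)! * (y / ((2 * n + 2) * (2 * n + 1))) ^ k := by
  induction k with
  | zero => simp
  | succ k ih =>
    have hratio :
        y / ((2 * (k + n) + 2) * (2 * (k + n) + 1)) ≤ y / ((2 * n + 2) * (2 * n + 1)) := by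
      gcongr <;> simp
    calc y ^ (k + 1 + n) / (2 * (k + 1 + n))!
        = y ^ (k + n) / (2 * (k + n))! * (y / ((2 * (k + n) + 2) * (2 * (k + n) + 1))) := by
          rw [show 2 * (k + 1 + n) = 2 * (k + n) + 2 by ring, cast_factorial_two_mul_add_two,
            show k + 1 + n = k + n + 1 by ring, pow_succ]
          push_cast
          field_simp
      _ ≤ y ^ n / (2 * n)! * (y / ((2 * n + 2) * (2 * n + 1))) ^ k *
            (y / ((2 * n + 2) * (2 * n + 1))) := by gcongr
      _ = y ^ n / (2 * n)! * (y / ((2 * n + 2) * (2 * n + 1))) ^ (k + 1) := by ring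

lemma t_mul_pow_lt {j : ℕ} (hj : 1 ≤ j) {y : ℝ} (hy : 0 < y) : t j * y ^ j < y ^ j / (2 * j)! := by
  calc t j * y ^ j < 1 / (2 * j)! * y ^ j := mul_lt_mul_of_pos_right (t_lt hj) (pow_pos hy j)
    _ = y ^ j / (2 * j)! := one_div_mul_eq_div _ _

lemma summable_t_mul_pow_nat_add (n : ℕ) (y : ℝ) :
    Summable fun k ↦ t (k + n) * y ^ (k + n) :=
  (summable_nat_add_iff (f := fun j ↦ t j * y ^ j) n).mpr (summable_t_mul_pow y)

lemma tsum_t_mul_pow_nat_add_pos (m : ℕ) {y : ℝ} (hy : 0 < y) :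
    0 < ∑' k, t (k + (m + 1)) * y ^ (k + (m + 1)) :=
  (summable_t_mul_pow_nat_add (m + 1) y).tsum_pos
    (fun _ ↦ mul_nonneg (t_nonneg _) (by positivity)) 0 (mul_pos (t_pos (by omega)) (by positivity))

lemma tsum_t_mul_pow_nat_add_lt (m : ℕ) {y : ℝ} (hy0 : 0 < y) (hy : y ≤ π ^ 2 / 4) :
    ∑' k, t (k + (m + 1)) * y ^ (k + (m + 1)) <
      y ^ (m + 1) / (2 * m + 2)! * (1 / (1 - π ^ 2 / 4 / ((2 * (m : ℝ) + 4) * (2 * m + 3)))) := by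
  set q := π ^ 2 / 4 / ((2 * (m : ℝ) + 4) * (2 * m + 3))
  have hq0 : 0 ≤ q := by positivity
  have hq1 : q < 1 := (div_lt_one (by positivity)).mpr (by nlinarith [pi_lt_d2, pi_pos])
  have hratio : y / ((2 * (m + 1 : ℕ) + 2) * (2 * (m + 1 : ℕ) + 1)) ≤ q := by
    push_cast
    apply div_le_div₀ (by positivity) hy (by positivity)
    nlinarith
  have hterm (k : ℕ) : t (k + (m + 1)) * y ^ (k + (m + 1)) ≤ y ^ (m + 1) / (2 * m + 2)! * q ^ k :=
    calc t (k + (m + 1)) * y ^ (k + (m + 1)) ≤ y ^ (k + (m + 1)) / (2 * (k + (m + 1)))! :=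
          (t_mul_pow_lt (by omega) hy0).le
      _ ≤ _ := (pow_div_factorial_two_mul_le hy0.le (m + 1) k).trans (by gcongr; omega)
  have hterm0 : t (0 + (m + 1)) * y ^ (0 + (m + 1)) < y ^ (m + 1) / (2 * m + 2)! * q ^ 0 := by
    simpa [mul_add] using t_mul_pow_lt (by omega : 1 ≤ m + 1) hy0
  calc ∑' k, t (k + (m + 1)) * y ^ (k + (m + 1)) < ∑' k, y ^ (m + 1) / (2 * m + 2)! * q ^ k :=
        (summable_t_mul_pow_nat_add (m + 1) y).tsum_lt_tsum hterm hterm0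
          ((summable_geometric_of_lt_one hq0 hq1).mul_left _)
    _ = y ^ (m + 1) / (2 * m + 2)! * (1 / (1 - q)) := by
        rw [tsum_mul_left, tsum_geometric_of_lt_one hq0 hq1, one_div]

theorem cos_sub_P_bound_general (m : ℕ) (x : ℝ) (hx1 : -(1 / 2) < x) (hx2 : x < 1 / 2) :
    0 < Real.cos (π * x) - P m x ∧
    Real.cos (π * x) - P m x <
      π ^ (2 * m + 2) * (1 / 4 - x ^ 2) ^ (m + 1) / (Nat.factorial (2 * m + 2)) *
        (1 / (1 - π ^ 2 / 4 / ((2 * (m : ℝ) + 4) * (2 * (m : ℝ) + 3)))) := by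
  have hy0 : 0 < π ^ 2 * (1 / 4 - x ^ 2) := mul_pos (by positivity) (by nlinarith)
  have hy : π ^ 2 * (1 / 4 - x ^ 2) ≤ π ^ 2 / 4 := by nlinarith [sq_nonneg x]
  rw [cos_sub_P_eq_tsum, show π ^ (2 * m + 2) * (1 / 4 - x ^ 2) ^ (m + 1) =
    (π ^ 2 * (1 / 4 - x ^ 2)) ^ (m + 1) by rw [mul_pow, ← pow_mul, mul_add, mul_one]]
  exact ⟨tsum_t_mul_pow_nat_add_pos m hy0, tsum_t_mul_pow_nat_add_lt m hy0 hy⟩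

/-- For `m ≥ 1` and `−1/2 < x < 1/2`,
`0 < cos(πx) − P_m(x) < π^{2m+2}(1/4−x²)^{m+1}/(2m+2)! · 1/(1−q_m)`,
where `q_m = (π²/4)/((2m+4)(2m+3))`. -/
theorem cos_sub_P_bound (m : ℕ) (hm : 1 ≤ m) (x : ℝ) (hx1 : -(1 / 2) < x) (hx2 : x < 1 / 2) :
    0 < Real.cos (π * x) - P m x ∧
    Real.cos (π * x) - P m x <
      π ^ (2 * m + 2) * (1 / 4 - x ^ 2) ^ (m + 1) / (Nat.factorial (2 * m + 2)) *
        (1 / (1 - π ^ 2 / 4 / ((2 * (m : ℝ) + 4) * (2 * (m : ℝ) + 3)))) :=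
  cos_sub_P_bound_general m x hx1 hx2
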